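/- Hamster's per-round Steady-State communication is O(mn): for n = 2f+1 and block size m ≥ 0 (a real number), the total number of bits sent — the leader sending one chunk of size m/(f+1) to each of the n nodes in the Propose step, plus each of the n nodes forwarding at most 2 chunks of size m/(f+1) to each of the other n−1 nodes in the Re-propose step — satisfies n·(m/(f+1)) + 2·n·(n−1)·(m/(f+1)) ≤ 4·m·n. -/
import Mathlib


/-- Hamster's per-round Steady-State communication is `O(mn)`: with `n = 2f+1`
nodes and block size `m`, the bits sent in the Propose step (`n` chunks of
size `m/(f+1)`) plus the Re-propose step (each node forwards at most `2`
chunks to each of the other `n-1` nodes) total at most `4·m·n`. -/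
theorem hamster_communication_linear (f : ℕ) (m : ℝ) (hm : 0 ≤ m) :
    let n : ℝ := 2 * (f : ℝ) + 1
    n * (m / ((f : ℝ) + 1)) + 2 * n * (n - 1) * (m / ((f : ℝ) + 1))
      ≤ 4 * m * n := by
  intro n
  have hf : (0:ℝ) < (f : ℝ) + 1 := by positivity
  rw [div_eq_mul_inv, ← sub_nonneg]
  have h1 : (0:ℝ) ≤ ((f:ℝ)+1)⁻¹ := by positivity
  have h2 : ((f:ℝ)+1) * ((f:ℝ)+1)⁻¹ = 1 := mul_inv_cancel₀ hf.ne'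
  have hf0 : (0:ℝ) ≤ (f:ℝ) := Nat.cast_nonneg f
  nlinarith [mul_nonneg hm h1, mul_nonneg (mul_nonneg hm h1) hf0, mul_nonneg hm hf0]
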